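/- Under the assumptions above, let u, v : ℝ → ℝ be continuously differentiable and set W(x) = (u(x), u'(x), v(x), v'(x)) ∈ ℝ⁴. Assume that the functions x ↦ F(W(x)) and x ↦ G(W(x)) are Lebesgue integrable on ℝ. Then ∫_ℝ G(W(x)) dx ≥ (p+2) ∫_ℝ F(W(x)) dx; that is, N(u,v) ≥ (p+2) K(u,v), where K(u,v) = ∫_ℝ F(u, u', v, v') dx and N(u,v) = ∫_ℝ G(u, u', v, v') dx. -/

import Mathlib

open RealInnerProductSpace MeasureTheory Gradient

/-!
Fix `w` and compare the radial profiles `φ t = F (t • w)` and `ψ t = G (t • w)`. The identity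
`G = ⟪w, ∇F w⟫` says `ψ t = t φ' t`, and condition (a) says `t ψ' t ≥ (p + 2) ψ t`, so
`ψ - (p + 2) φ` has nonnegative derivative on `t > 0`. It vanishes at `0` because `F 0 = 0`,
hence `(p + 2) F w ≤ G w` at `t = 1`; integrating this pointwise inequality gives the claim.
-/

theorem mul_le_of_mul_deriv_ge {φ ψ φ' ψ' : ℝ → ℝ} {c : ℝ}
    (hφ : ∀ t, HasDerivAt φ (φ' t) t) (hψ : ∀ t, HasDerivAt ψ (ψ' t) t)
    (hψφ : ∀ t, ψ t = t * φ' t) (hψψ : ∀ t, c * ψ t ≤ t * ψ' t) (hφ0 : φ 0 = 0) :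
    c * φ 1 ≤ ψ 1 := by
  have hderiv : ∀ t, HasDerivAt (fun s => ψ s - c * φ s) (ψ' t - c * φ' t) t :=
    fun t => (hψ t).sub ((hφ t).const_mul c)
  have hmono : MonotoneOn (fun s => ψ s - c * φ s) (Set.Ici 0) := by
    refine monotoneOn_of_hasDerivWithinAt_nonneg (convex_Ici 0)
      (HasDerivAt.continuousOn fun t _ => hderiv t)
      (fun t _ => (hderiv t).hasDerivWithinAt) fun t ht => ?_
    rw [interior_Ici, Set.mem_Ioi] at ht
    have hEuler := hψψ t
    rw [hψφ] at hEuler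
    nlinarith
  have h01 := hmono (Set.mem_Ici.2 le_rfl) (Set.mem_Ici.2 zero_le_one) zero_le_one
  simp only [hψφ 0, hφ0] at h01
  linarith

variable {E : Type*} [NormedAddCommGroup E] [InnerProductSpace ℝ E] [CompleteSpace E]

theorem DifferentiableAt.hasDerivAt_comp_smul {F : E → ℝ} {w : E} {t : ℝ}
    (hF : DifferentiableAt ℝ F (t • w)) :
    HasDerivAt (fun s : ℝ => F (s • w)) ⟪w, ∇ F (t • w)⟫ t := by
  rw [inner_gradient_right]
  exact hF.hasFDerivAt.comp_hasDerivAt t (by simpa using (hasDerivAt_id t).smul_const w)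

theorem ContDiff.differentiable_inner_gradient {F : E → ℝ} {n : WithTop ℕ∞}
    (hF : ContDiff ℝ n F) (hn : 2 ≤ n) :
    Differentiable ℝ fun w => ⟪w, ∇ F w⟫ := by
  simp_rw [inner_gradient_right]
  exact ((hF.fderiv_right (m := 1) hn).differentiable one_ne_zero).clm_apply differentiable_id

theorem mul_le_of_mul_le_inner_gradient {F G : E → ℝ} {c : ℝ} (hF : Differentiable ℝ F)
    (hG : Differentiable ℝ G) (hF0 : F 0 = 0) (hGF : ∀ w, G w = ⟪w, ∇ F w⟫)
    (hcG : ∀ w, c * G w ≤ ⟪w, ∇ G w⟫) (w : E) :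
    c * F w ≤ G w := by
  simpa using mul_le_of_mul_deriv_ge (φ := fun t : ℝ => F (t • w)) (ψ := fun t => G (t • w))
    (fun t => (hF _).hasDerivAt_comp_smul) (fun t => (hG _).hasDerivAt_comp_smul)
    (fun t => by rw [hGF, real_inner_smul_left])
    (fun t => by simpa only [real_inner_smul_left] using hcG (t • w)) (by simpa using hF0)

theorem stmt_6_general (p : ℝ)
    (F : EuclideanSpace ℝ (Fin 4) → ℝ)
    (hF : ContDiff ℝ 2 F) (hF0 : F 0 = 0)
    (G : EuclideanSpace ℝ (Fin 4) → ℝ)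
    (hG : ∀ w, G w = ⟪w, gradient F w⟫)
    (ha : ∀ w, ⟪w, gradient G w⟫ ≥ (p + 2) * G w)
    (W : ℝ → EuclideanSpace ℝ (Fin 4))
    (hK : Integrable (fun x => F (W x)))
    (hN : Integrable (fun x => G (W x))) :
    ∫ x : ℝ, G (W x) ≥ (p + 2) * ∫ x : ℝ, F (W x) := by
  have hGdiff : Differentiable ℝ G := by
    rw [funext hG]
    exact hF.differentiable_inner_gradient le_rfl
  have hpointwise : ∀ x, (p + 2) * F (W x) ≤ G (W x) := fun x =>
    mul_le_of_mul_le_inner_gradient (hF.differentiable two_ne_zero) hGdiff hF0 hG ha (W x)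
  rw [ge_iff_le, ← integral_const_mul]
  exact integral_mono (hK.const_mul _) hN hpointwise

/-- Lemma (Esfahani–Levandosky type), item (v): under condition (a),
`N(u,v) ≥ (p+2) K(u,v)`, i.e. `∫ G(W) ≥ (p+2) ∫ F(W)` where
`W(x) = (u(x), u'(x), v(x), v'(x))`. -/
theorem stmt_6 (p : ℝ) (hp : 0 < p)
    (F : EuclideanSpace ℝ (Fin 4) → ℝ)
    (hF : ContDiff ℝ 2 F) (hF0 : F 0 = 0)
    (G : EuclideanSpace ℝ (Fin 4) → ℝ)
    (hG : ∀ w, G w = ⟪w, gradient F w⟫)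
    (ha : ∀ w, ⟪w, gradient G w⟫ ≥ (p + 2) * G w)
    (u v : ℝ → ℝ) (hu : ContDiff ℝ 1 u) (hv : ContDiff ℝ 1 v)
    (W : ℝ → EuclideanSpace ℝ (Fin 4))
    (hW : ∀ x, W x = (WithLp.equiv 2 (Fin 4 → ℝ)).symm ![u x, deriv u x, v x, deriv v x])
    (hK : Integrable (fun x => F (W x)))
    (hN : Integrable (fun x => G (W x))) :
    ∫ x : ℝ, G (W x) ≥ (p + 2) * ∫ x : ℝ, F (W x) :=
  stmt_6_general p F hF hF0 G hG ha W hK hN
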